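/- Let p be an odd prime and let i, k be integers with 2 ≤ i ≤ k. Then i + v_p(C(k,i)) > 1 + v_p(k), where C(k,i) is the binomial coefficient and v_p denotes the p-adic valuation. (Consequently, for p odd, ((1+p)^k − 1)/p = ∑_{i=1}^{k} C(k,i)·p^{i−1} agrees with k up to a p-adic unit.) -/

import Mathlib

/-! The identity `k · C(k-1, i-1) = i · C(k, i)` gives `v_p(k) ≤ v_p(C(k,i)) + v_p(i)`, and for
`p ≥ 3` the bound `3 ^ v_p(i) ≤ p ^ v_p(i) ≤ i` forces `v_p(i) + 1 < i` whenever `i ≥ 2`. -/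

lemma padicValNat_add_one_lt_self {p i : ℕ} (hp : 3 ≤ p) (hi : 2 ≤ i) :
    padicValNat p i + 1 < i := by
  set v := padicValNat p i
  rcases Nat.eq_zero_or_pos v with hv | hv
  · omega
  calc v + 1 < 1 + v * 2 := by omega
    _ ≤ (1 + 2) ^ v := one_add_le_pow_of_two_add_nonneg (Nat.zero_le _) v
    _ ≤ p ^ v := Nat.pow_le_pow_left hp v
    _ ≤ i := Nat.le_of_dvd (by omega) pow_padicValNat_dvd

lemma padicValNat_le_padicValNat_choose_add {p k i : ℕ} [Fact p.Prime] (hi : 1 ≤ i)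
    (hik : i ≤ k) : padicValNat p k ≤ padicValNat p (k.choose i) + padicValNat p i := by
  obtain ⟨n, rfl⟩ : ∃ n, k = n + 1 := ⟨k - 1, by omega⟩
  obtain ⟨j, rfl⟩ : ∃ j, i = j + 1 := ⟨i - 1, by omega⟩
  have hchoose : (n + 1) * n.choose j = (n + 1).choose (j + 1) * (j + 1) :=
    Nat.add_one_mul_choose_eq n j
  have hval := congrArg (padicValNat p) hchoose
  rw [padicValNat.mul (by omega) (Nat.choose_pos (by omega)).ne',
    padicValNat.mul (Nat.choose_pos hik).ne' (by omega)] at hval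
  omega

theorem stmt11 (p : ℕ) (hp : p.Prime) (hodd : p ≠ 2) (i k : ℕ) (hi : 2 ≤ i) (hik : i ≤ k) :
    1 + padicValNat p k < i + padicValNat p (k.choose i) := by
  have : Fact p.Prime := ⟨hp⟩
  have hp3 : 3 ≤ p := by have := hp.two_le; omega
  have hk := padicValNat_le_padicValNat_choose_add (p := p) (by omega : 1 ≤ i) hik
  have hi' := padicValNat_add_one_lt_self hp3 hi
  omega
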